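/- arXiv:2306.10928 — 6 statements merged into one kernel-verified Lean document; each statement's English description precedes it below -/
import Mathlib

section
/- Let K be a finite field with q elements and d a natural number dividing q-1. If d is odd, then the product of Gauss sums Π_{η ≠ 1, η ∈ Hom(K*/(K*)^d, ℂ*)} G(η, ψ) equals q^{(d-1)/2}, for any nontrivial additive character ψ of K. -/
/-- For a finite field `K` with `q` elements, `d` odd dividing `q - 1`, and `ψ` a
nontrivial additive character, the product of the Gauss sums `G(η,ψ)` over all
nontrivial multiplicative characters `η` trivial on `d`-th powers (i.e. `η ^ d = 1`)
equals `q^((d-1)/2)`. -/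
theorem stmt_5 {K : Type*} [Field K] [Fintype K] [DecidableEq K]
    (ψ : AddChar K ℂ) (hψ : ψ ≠ 1)
    (d : ℕ) (hd : Odd d) (hdvd : d ∣ Fintype.card K - 1)
    (S : Finset (MulChar K ℂ))
    (hS : ∀ η : MulChar K ℂ, η ∈ S ↔ (η ^ d = 1 ∧ η ≠ 1)) :
    ∏ η ∈ S, ∑ x : Kˣ, η (x : K) * ψ (x : K) =
      (Fintype.card K : ℂ) ^ ((d - 1) / 2) := by
  classical
  have hd0 : 0 < d := hd.pos
  have hq0 : (0 : ℝ) < Fintype.card K := by positivity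
  have hqC : (Fintype.card K : ℂ) ≠ 0 := by
    exact_mod_cast Nat.cast_ne_zero.mpr Fintype.card_ne_zero
  have hψp : ψ.IsPrimitive := AddChar.IsPrimitive.of_ne_one hψ
  -- Step 1: rewrite the sums over units as Gauss sums
  have hsum : ∀ η : MulChar K ℂ,
      (∑ x : Kˣ, η (x : K) * ψ (x : K)) = gaussSum η ψ := by
    intro η
    rw [gaussSum, ← Finset.add_sum_erase _ _ (Finset.mem_univ (0 : K)),
      MulChar.map_nonunit η not_isUnit_zero, zero_mul, zero_add]
    refine Finset.sum_bij (fun (x : Kˣ) _ => (x : K)) ?_ ?_ ?_ ?_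
    · intro x _
      exact Finset.mem_erase.mpr ⟨x.ne_zero, Finset.mem_univ _⟩
    · intro x _ y _ h
      exact Units.ext h
    · intro x hx
      obtain ⟨hx0, -⟩ := Finset.mem_erase.mp hx
      exact ⟨Units.mk0 x hx0, Finset.mem_univ _, rfl⟩
    · intro x _; rfl
  -- Facts about members of S
  have hinvmem : ∀ η ∈ S, η⁻¹ ∈ S := by
    intro η hη
    obtain ⟨h1, h2⟩ := (hS η).mp hη
    exact (hS η⁻¹).mpr ⟨by rw [inv_pow, h1, inv_one], fun h => h2 (inv_eq_one.mp h)⟩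
  have hne : ∀ η ∈ S, η⁻¹ ≠ η := by
    intro η hη h
    obtain ⟨h1, h2⟩ := (hS η).mp hη
    have hsq : η ^ 2 = 1 := by
      rw [pow_two]
      nth_rewrite 1 [← h]
      exact inv_mul_cancel η
    obtain ⟨k, hk⟩ := hd
    apply h2
    calc η = η ^ d := by rw [hk, pow_add, pow_mul, hsq, one_pow, one_mul, pow_one]
    _ = 1 := h1
  -- Step 2: the pair identity G(η)·G(η⁻¹) = q
  have hpair : ∀ η ∈ S, gaussSum η ψ * gaussSum η⁻¹ ψ = (Fintype.card K : ℂ) := by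
    intro η hη
    obtain ⟨hηd, hη1⟩ := (hS η).mp hη
    have h1 : η⁻¹ (-1) * gaussSum η⁻¹ ψ⁻¹ = gaussSum η⁻¹ ψ :=
      mul_gaussSum_inv_eq_gaussSum η⁻¹ ψ
    have h2 : gaussSum η ψ * gaussSum η⁻¹ ψ⁻¹ = (Fintype.card K : ℂ) :=
      gaussSum_mul_gaussSum_eq_card hη1 hψp
    have hm1 : η⁻¹ (-1) = 1 := by
      set u := η⁻¹ (-1) with hu
      have hu2 : u ^ 2 = 1 := by
        rw [hu, ← map_pow, neg_one_sq, map_one]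
      have hud : u ^ d = 1 := by
        rw [hu, ← MulChar.pow_apply' η⁻¹ hd0.ne', inv_pow, hηd, inv_one,
          MulChar.one_apply (isUnit_one.neg)]
      obtain ⟨k, hk⟩ := hd
      calc u = u ^ d := by rw [hk, pow_add, pow_mul, hu2, one_pow, one_mul, pow_one]
      _ = 1 := hud
    rw [← h1, hm1, one_mul, h2]
  -- Step 3: cardinality of S is d - 1
  haveI : Fintype (MulChar K ℂ) := Fintype.ofFinite _
  haveI : IsCyclic (MulChar K ℂ) :=
    isCyclic_of_surjective _ (MulChar.equiv_rootsOfUnity K ℂ).symm.surjective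
  obtain ⟨χ₀, hχ₀⟩ := MulChar.exists_mulChar_orderOf K hdvd (Complex.isPrimitiveRoot_exp d hd0.ne')
  have hcardle : (Finset.univ.filter (fun η : MulChar K ℂ => η ^ d = 1)).card ≤ d :=
    IsCyclic.card_pow_eq_one_le hd0
  have himsub : (Finset.range d).image (fun i => χ₀ ^ i) ⊆
      Finset.univ.filter (fun η : MulChar K ℂ => η ^ d = 1) := by
    intro η hη
    simp only [Finset.mem_image, Finset.mem_range] at hη
    obtain ⟨i, _, rfl⟩ := hη
    simp only [Finset.mem_filter, Finset.mem_univ, true_and]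
    rw [← pow_mul, mul_comm, pow_mul, ← hχ₀, pow_orderOf_eq_one, one_pow]
  have himcard : ((Finset.range d).image (fun i => χ₀ ^ i)).card = d := by
    rw [Finset.card_image_of_injOn, Finset.card_range]
    intro i hi j hj hij
    exact pow_injOn_Iio_orderOf (by simpa [hχ₀] using Finset.mem_range.mp hi)
      (by simpa [hχ₀] using Finset.mem_range.mp hj) hij
  have hfiltcard : (Finset.univ.filter (fun η : MulChar K ℂ => η ^ d = 1)).card = d :=
    le_antisymm hcardle (by
      calc d = ((Finset.range d).image (fun i => χ₀ ^ i)).card := himcard.symm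
      _ ≤ _ := Finset.card_le_card himsub)
  have hSeq : S = (Finset.univ.filter (fun η : MulChar K ℂ => η ^ d = 1)).erase 1 := by
    ext η
    rw [hS, Finset.mem_erase, Finset.mem_filter]
    simp only [Finset.mem_univ, true_and]
    tauto
  have hScard : S.card = d - 1 := by
    rw [hSeq, Finset.card_erase_of_mem, hfiltcard]
    simp [Finset.mem_filter]
  -- Step 4: the product via an involution
  set c : ℂ := (Real.sqrt (Fintype.card K) : ℂ) with hc
  have hc2 : c ^ 2 = (Fintype.card K : ℂ) := by
    rw [hc]
    norm_cast
    exact Real.sq_sqrt hq0.le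
  have hc0 : c ≠ 0 := by
    rw [hc]
    exact_mod_cast (Real.sqrt_pos.mpr hq0).ne'
  have hprod1 : ∏ η ∈ S, (gaussSum η ψ / c) = 1 := by
    refine Finset.prod_involution (fun η _ => η⁻¹) ?_ (fun η hη _ => hne η hη)
      (fun η hη => hinvmem η hη) (fun η hη => inv_inv η)
    intro η hη
    rw [div_mul_div_comm, hpair η hη, ← hc2, sq]
    field_simp
  have hfinal : ∏ η ∈ S, gaussSum η ψ = c ^ (d - 1) := by
    calc ∏ η ∈ S, gaussSum η ψ = ∏ η ∈ S, (gaussSum η ψ / c * c) := by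
          refine Finset.prod_congr rfl fun η _ => ?_
          field_simp
    _ = (∏ η ∈ S, (gaussSum η ψ / c)) * c ^ S.card := by rw [Finset.prod_mul_distrib,
          Finset.prod_const]
    _ = c ^ (d - 1) := by rw [hprod1, one_mul, hScard]
  have heven : (d - 1) / 2 * 2 = d - 1 :=
    Nat.div_mul_cancel (Nat.Odd.sub_odd hd odd_one).two_dvd
  calc ∏ η ∈ S, ∑ x : Kˣ, η (x : K) * ψ (x : K) = ∏ η ∈ S, gaussSum η ψ :=
        Finset.prod_congr rfl fun η _ => hsum η
  _ = c ^ (d - 1) := hfinal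
  _ = (c ^ 2) ^ ((d - 1) / 2) := by rw [← pow_mul, mul_comm, heven]
  _ = (Fintype.card K : ℂ) ^ ((d - 1) / 2) := by rw [hc2]
end

section
/- Let K be a finite field with q elements of odd characteristic, d an even natural number dividing q-1, ψ a nontrivial additive character of K, and η_o a generator of the cyclic group of characters of K*/(K*)^d. Then Π_{η ≠ 1, η ∈ Hom(K*/(K*)^d, ℂ*)} G(η, ψ) = q^{(d-2)/2} · η_o(-1)^{d(d-2)/8} · G_ψ(K). -/
open Finset

section aux

variable {K : Type*} [Field K] [Fintype K] [DecidableEq K]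

private lemma gauss_over_units (η : MulChar K ℂ) (ψ : AddChar K ℂ) :
    (∑ x : Kˣ, η (x : K) * ψ (x : K)) = gaussSum η ψ := by
  rw [gaussSum]
  rw [show (Finset.univ : Finset K) = insert 0 (Finset.univ \ {0}) by
    ext x; by_cases hx : x = 0 <;> simp [hx]]
  rw [Finset.sum_insert (by simp)]
  rw [η.map_nonunit not_isUnit_zero, zero_mul, zero_add]
  have : ∑ x ∈ Finset.univ \ {0}, η x * ψ x = ∑ u : Kˣ, η (u : K) * ψ (u : K) := by
    refine Finset.sum_bij' (fun (x : K) (hx : x ∈ Finset.univ \ {0}) =>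
        Units.mk0 x (by simpa using hx)) (fun u _ => (u : K)) ?_ ?_ ?_ ?_ ?_
    · intro a ha; simp
    · intro u _; simp [u.ne_zero]
    · intro a ha; rfl
    · intro u _; exact Units.ext rfl
    · intro a ha; rfl
  rw [this]

private lemma pair_gauss {ψ : AddChar K ℂ} (hψ : ψ.IsPrimitive) {χ : MulChar K ℂ}
    (hχ : χ ≠ 1) : gaussSum χ ψ * gaussSum χ⁻¹ ψ = χ (-1) * (Fintype.card K : ℂ) := by
  rw [← mul_gaussSum_inv_eq_gaussSum χ⁻¹ ψ, mul_left_comm,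
    gaussSum_mul_gaussSum_eq_card hχ hψ, MulChar.inv_apply', inv_neg_one]

end aux

/-- For a finite field `K` of odd characteristic with `q` elements, `d` even dividing
`q - 1`, `ψ` a nontrivial additive character, and `η_o` a generator of the (cyclic of
order `d`) group of multiplicative characters trivial on `d`-th powers, the product of
the Gauss sums `G(η,ψ)` over all nontrivial characters `η` with `η ^ d = 1` equals
`q^((d-2)/2) · η_o(-1)^(d(d-2)/8) · G_ψ(K)`. -/
theorem stmt_6 {K : Type*} [Field K] [Fintype K] [DecidableEq K] (hchar : ringChar K ≠ 2)
    (ψ : AddChar K ℂ) (hψ : ψ ≠ 1)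
    (d : ℕ) (hd : Even d) (hd0 : 0 < d) (hdvd : d ∣ Fintype.card K - 1)
    (η_o : MulChar K ℂ) (hord : orderOf η_o = d)
    (hgen : ∀ η : MulChar K ℂ, η ^ d = 1 → ∃ k : ℕ, η = η_o ^ k)
    (S : Finset (MulChar K ℂ))
    (hS : ∀ η : MulChar K ℂ, η ∈ S ↔ (η ^ d = 1 ∧ η ≠ 1)) :
    ∏ η ∈ S, ∑ x : Kˣ, η (x : K) * ψ (x : K) =
      (Fintype.card K : ℂ) ^ ((d - 2) / 2) * (η_o (-1 : K)) ^ (d * (d - 2) / 8) *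
        ∑ x : K, ψ (x ^ 2) := by
  classical
  have hprim : ψ.IsPrimitive := AddChar.IsPrimitive.of_ne_one hψ
  obtain ⟨m, hm⟩ := hd
  have hm1 : 1 ≤ m := by omega
  have h2K : (2 : K) ≠ 0 := Ring.two_ne_zero hchar
  have hηd : η_o ^ d = 1 := by rw [← hord]; exact pow_orderOf_eq_one _
  set χ₂ : MulChar K ℂ := η_o ^ m with hχ₂def
  have horder2 : orderOf χ₂ = 2 := by
    rw [hχ₂def, orderOf_pow, hord, hm, Nat.gcd_eq_right ⟨2, by ring⟩,
      show m + m = 2 * m by ring, Nat.mul_div_cancel _ (by omega)]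
  have hχ₂ne : χ₂ ≠ 1 := by
    intro h
    rw [h, orderOf_one] at horder2
    omega
  have hχ₂sq : χ₂ * χ₂ = 1 := by
    have := pow_orderOf_eq_one χ₂
    rwa [horder2, pow_two] at this
  have hsqval : ∀ a : K, a ≠ 0 → IsSquare a → χ₂ a = 1 := by
    rintro a ha ⟨y, rfl⟩
    have hy : y ≠ 0 := by
      intro h; exact ha (by rw [h, mul_zero])
    rw [map_mul, ← MulChar.mul_apply, hχ₂sq, MulChar.one_apply (isUnit_iff_ne_zero.mpr hy)]
  have hpm : ∀ a : K, a ≠ 0 → χ₂ a = 1 ∨ χ₂ a = -1 := by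
    intro a ha
    refine mul_self_eq_one_iff.mp ?_
    rw [← MulChar.mul_apply, hχ₂sq, MulChar.one_apply (isUnit_iff_ne_zero.mpr ha)]
  have hnonsq : ∀ a : K, ¬ IsSquare a → χ₂ a = -1 := by
    intro a ha
    have ha0 : a ≠ 0 := by
      intro h; exact ha ⟨0, by rw [h, mul_zero]⟩
    rcases hpm a ha0 with h1 | h2
    · exfalso
      apply hχ₂ne
      apply MulChar.ext
      intro u
      rw [MulChar.one_apply u.isUnit]
      by_cases hu : IsSquare (u : K)
      · exact hsqval _ u.ne_zero hu
      · have hsq : IsSquare (a⁻¹ * (u : K)) := by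
          have hq1 : quadraticChar K a = -1 := quadraticChar_neg_one_iff_not_isSquare.mpr ha
          have hq2 : quadraticChar K (u : K) = -1 :=
            quadraticChar_neg_one_iff_not_isSquare.mpr hu
          have hq3 : quadraticChar K a⁻¹ = -1 := by
            rwa [quadraticChar_neg_one_iff_not_isSquare, isSquare_inv]
          have : quadraticChar K (a⁻¹ * (u : K)) = 1 := by
            rw [map_mul, hq3, hq2]; ring
          exact (quadraticChar_one_iff_isSquare
            (mul_ne_zero (inv_ne_zero ha0) u.ne_zero)).mp this
        have : (u : K) = a * (a⁻¹ * (u : K)) := by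
          field_simp
        rw [this, map_mul, h1, one_mul,
          hsqval _ (mul_ne_zero (inv_ne_zero ha0) u.ne_zero) hsq]
    · exact h2
  -- counting solutions of x^2 = b
  have hcount : ∀ b : K, (((Finset.univ.filter fun x : K => x ^ 2 = b).card : ℂ)) =
      1 + χ₂ b := by
    intro b
    by_cases hb : b = 0
    · subst hb
      rw [show (Finset.univ.filter fun x : K => x ^ 2 = 0) = {0} by
        ext x; simp [pow_eq_zero_iff]]
      rw [χ₂.map_nonunit not_isUnit_zero]
      simp
    · by_cases hsq : IsSquare b
      · obtain ⟨y, rfl⟩ := hsq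
        have hy : y ≠ 0 := by intro h; exact hb (by rw [h, mul_zero])
        have hset : (Finset.univ.filter fun x : K => x ^ 2 = y * y) = {y, -y} := by
          ext x
          simp only [Finset.mem_filter, Finset.mem_univ, true_and, Finset.mem_insert,
            Finset.mem_singleton]
          rw [← sq y, sq_eq_sq_iff_eq_or_eq_neg]
        rw [hset, hsqval _ hb ⟨y, rfl⟩]
        rw [Finset.card_insert_of_notMem (by
          simp only [Finset.mem_singleton]
          intro h
          apply hy
          have : (2 : K) * y = 0 := by rw [two_mul]; linear_combination h
          exact (mul_eq_zero.mp this).resolve_left h2K)]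
        norm_num
      · have hset : (Finset.univ.filter fun x : K => x ^ 2 = b) = ∅ := by
          ext x
          simp only [Finset.mem_filter, Finset.mem_univ, true_and, Finset.notMem_empty,
            iff_false]
          intro h
          exact hsq ⟨x, by rw [← h, sq]⟩
        rw [hset, hnonsq _ hsq]
        simp
  -- the sum of ψ (x^2) is the Gauss sum of the quadratic character
  have key : ∑ x : K, ψ (x ^ 2) = gaussSum χ₂ ψ := by
    have h1 : ∑ x : K, ψ (x ^ 2) = ∑ b ∈ Finset.univ.image (fun x : K => x ^ 2),
        (Finset.univ.filter fun x : K => x ^ 2 = b).card • ψ b :=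
      Finset.sum_comp (fun b => ψ b) (fun x : K => x ^ 2)
    rw [h1, Finset.sum_subset (Finset.subset_univ _) (by
      intro b _ hb
      have : (Finset.univ.filter fun x : K => x ^ 2 = b) = ∅ := by
        ext x
        simp only [Finset.mem_filter, Finset.mem_univ, true_and, Finset.notMem_empty,
          iff_false]
        intro h
        exact hb (Finset.mem_image.mpr ⟨x, Finset.mem_univ x, h⟩)
      rw [this]
      simp)]
    have h2 : ∀ b : K, (Finset.univ.filter fun x : K => x ^ 2 = b).card • ψ b =
        (1 + χ₂ b) * ψ b := by
      intro b
      rw [nsmul_eq_mul, hcount b]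
    rw [Finset.sum_congr rfl fun b _ => h2 b]
    simp only [add_mul, one_mul, Finset.sum_add_distrib]
    rw [AddChar.sum_eq_zero_of_ne_one hψ, zero_add, gaussSum]
  -- identify S with powers of η_o
  have hSeq : S = (Finset.Ico 1 d).image (fun k => η_o ^ k) := by
    ext η
    rw [hS, Finset.mem_image]
    constructor
    · rintro ⟨h1, h2⟩
      obtain ⟨k, rfl⟩ := hgen η h1
      refine ⟨k % d, Finset.mem_Ico.mpr ⟨?_, Nat.mod_lt _ hd0⟩, ?_⟩
      · rcases Nat.eq_zero_or_pos (k % d) with h | h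
        swap
        · exact h
        · exfalso
          apply h2
          rw [← hord] at h
          rw [← pow_mod_orderOf, h, pow_zero]
      · rw [← hord, pow_mod_orderOf]
    · rintro ⟨k, hk, rfl⟩
      rw [Finset.mem_Ico] at hk
      constructor
      · rw [← pow_mul, mul_comm, pow_mul, hηd, one_pow]
      · exact pow_ne_one_of_lt_orderOf (by omega) (by rw [hord]; exact hk.2)
  have hinj : ∀ a ∈ Finset.Ico 1 d, ∀ b ∈ Finset.Ico 1 d,
      η_o ^ a = η_o ^ b → a = b := by
    intro a ha b hb h
    rw [Finset.mem_Ico] at ha hb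
    exact pow_injOn_Iio_orderOf (by rw [hord]; exact Set.mem_Iio.mpr ha.2)
      (by rw [hord]; exact Set.mem_Iio.mpr hb.2) h
  -- rewrite the product
  rw [Finset.prod_congr rfl fun η _ => gauss_over_units η ψ, hSeq, Finset.prod_image hinj]
  -- split the product
  have hsplit : (∏ k ∈ Finset.Ico 1 d, gaussSum (η_o ^ k) ψ) =
      (∏ k ∈ Finset.Ico 1 m, gaussSum (η_o ^ k) ψ) *
        (gaussSum (η_o ^ m) ψ * ∏ k ∈ Finset.Ico (m + 1) d, gaussSum (η_o ^ k) ψ) := by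
    rw [← Finset.prod_Ico_consecutive _ hm1 (show m ≤ d by omega),
      Finset.prod_eq_prod_Ico_succ_bot (show m < d by omega)]
  rw [hsplit]
  -- reindex the top part
  have hreindex : (∏ k ∈ Finset.Ico (m + 1) d, gaussSum (η_o ^ k) ψ) =
      ∏ k ∈ Finset.Ico 1 m, gaussSum (η_o ^ (d - k)) ψ := by
    refine Finset.prod_bij' (fun k _ => d - k) (fun k _ => d - k) ?_ ?_ ?_ ?_ ?_
    · intro a ha; simp only [Finset.mem_Ico] at ha
      show d - a ∈ Finset.Ico 1 m
      simp only [Finset.mem_Ico]; omega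
    · intro a ha; simp only [Finset.mem_Ico] at ha
      show d - a ∈ Finset.Ico (m + 1) d
      simp only [Finset.mem_Ico]; omega
    · intro a ha; simp only [Finset.mem_Ico] at ha
      show d - (d - a) = a
      omega
    · intro a ha; simp only [Finset.mem_Ico] at ha
      show d - (d - a) = a
      omega
    · intro a ha
      simp only [Finset.mem_Ico] at ha
      show gaussSum (η_o ^ a) ψ = gaussSum (η_o ^ (d - (d - a))) ψ
      congr 2
      omega
  rw [hreindex, mul_comm (gaussSum (η_o ^ m) ψ), ← mul_assoc, ← Finset.prod_mul_distrib]
  -- evaluate the pairs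
  have hpair : ∀ k ∈ Finset.Ico 1 m, gaussSum (η_o ^ k) ψ * gaussSum (η_o ^ (d - k)) ψ =
      (η_o (-1 : K)) ^ k * (Fintype.card K : ℂ) := by
    intro k hk
    rw [Finset.mem_Ico] at hk
    have hkd : η_o ^ (d - k) = (η_o ^ k)⁻¹ := by
      refine eq_inv_of_mul_eq_one_left ?_
      rw [← pow_add, Nat.sub_add_cancel (by omega), hηd]
    have hkne : η_o ^ k ≠ 1 :=
      pow_ne_one_of_lt_orderOf (by omega) (by rw [hord]; omega)
    rw [hkd, pair_gauss hprim hkne, MulChar.pow_apply' _ (by omega)]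
  rw [Finset.prod_congr rfl hpair, Finset.prod_mul_distrib, Finset.prod_const,
    Finset.prod_pow_eq_pow_sum]
  -- arithmetic of exponents
  have hsum : ∑ k ∈ Finset.Ico 1 m, k = m * (m - 1) / 2 := by
    rw [← Finset.sum_range_id m, Finset.range_eq_Ico,
      ← Finset.sum_Ico_consecutive _ (Nat.zero_le 1) hm1]
    simp
  have hcardIco : (Finset.Ico 1 m).card = m - 1 := by
    rw [Nat.card_Ico]
  have hd2 : (d - 2) / 2 = m - 1 := by omega
  have hd8 : d * (d - 2) / 8 = m * (m - 1) / 2 := by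
    obtain ⟨m', rfl⟩ : ∃ m', m = m' + 1 := ⟨m - 1, by omega⟩
    have h1 : d * (d - 2) = 4 * ((m' + 1) * (m' + 1 - 1)) := by
      have h2 : (m' + 1) + (m' + 1) - 2 = 2 * m' := by omega
      rw [hm, h2, Nat.add_sub_cancel]
      ring
    rw [h1, show (8 : ℕ) = 4 * 2 from rfl, Nat.mul_div_mul_left _ _ (by norm_num)]
  rw [hsum, hcardIco, hd2, hd8, key]
  ring
end

section
/- Let K be a finite field of odd characteristic and d an odd natural number dividing |K| - 1. Then η_K(d) = sign(K)^{(d-1)/2}, where η_K is the quadratic character of K* and sign(K) = η_K(-1). -/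
open Classical

/-!
Write `d = 2m + 1` and let `ζ ∈ K` be a primitive `d`-th root of unity. Then
`d = ∏_{k=1}^{d-1} (1 - ζ^k)`, and pairing `k` with `d - k` gives
`(1 - ζ^k)(1 - ζ^{-k}) = -ζ^{-k}(1 - ζ^k)^2`. A quadratic character is `1` on nonzero squares
and, since `d` is odd, on `ζ`; so each of the `m` pairs contributes `η(-1)`. Finally
`η(-1) = sign(K)`, because a nontrivial quadratic character of the cyclic group `K*` is `-1` on a
generator, hence on every non-square.
-/

open Finset

theorem Finset.prod_range_two_mul_eq_prod_mul_reflect {M : Type*} [CommMonoid M] (f : ℕ → M)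
    (m : ℕ) : ∏ k ∈ range (2 * m), f k = ∏ k ∈ range m, f k * f (2 * m - 1 - k) := by
  rw [prod_mul_distrib, two_mul, prod_range_add, ← prod_range_reflect (fun k ↦ f (m + k)) m]
  refine congrArg _ (prod_congr rfl fun k hk ↦ congrArg f ?_)
  have := mem_range.mp hk
  omega

theorem FiniteField.exists_isPrimitiveRoot {K : Type*} [Field K] [Fintype K] {d : ℕ}
    (hd : d ∣ Fintype.card K - 1) : ∃ ζ : K, IsPrimitiveRoot ζ d := by
  obtain ⟨g, hg⟩ := IsCyclic.exists_ofOrder_eq_natCard (α := Kˣ)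
  have hdg : d ∣ orderOf g := by rwa [hg, Nat.card_eq_fintype_card, Fintype.card_units]
  have hg0 : orderOf g ≠ 0 := by rw [hg]; exact Nat.card_pos.ne'
  have hζ := IsPrimitiveRoot.orderOf (g ^ (orderOf g / d))
  rw [orderOf_pow_orderOf_div hg0 hdg] at hζ
  exact ⟨_, IsPrimitiveRoot.coe_units_iff.mpr hζ⟩

namespace MulChar

section Quadratic

variable {F R : Type*} [Field F] [CommRing R] {χ : MulChar F R}

theorem apply_sq_of_sq_eq_one (hχ : χ ^ 2 = 1) {a : F} (ha : a ≠ 0) : χ (a ^ 2) = 1 := by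
  lift a to Fˣ using ha.isUnit
  rw [map_pow, ← pow_apply_coe, hχ, one_apply_coe]

theorem apply_eq_one_of_pow_eq_one (hχ : χ ^ 2 = 1) {d : ℕ} (hd : Odd d) {ζ : F}
    (hζ : ζ ^ d = 1) : χ ζ = 1 := by
  have hζ0 : ζ ≠ 0 := by rintro rfl; simp [hd.pos.ne'] at hζ
  refine (pow_eq_one_iff_of_coprime (Nat.coprime_two_left.mpr hd)).mp ⟨?_, ?_⟩
  · rw [← map_pow, apply_sq_of_sq_eq_one hχ hζ0]
  · rw [← map_pow, hζ, map_one]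

theorem apply_one_sub_mul_one_sub_of_mul_eq_one (hχ : χ ^ 2 = 1) {a b : F} (hab : a * b = 1)
    (ha : χ a = 1) (ha1 : a ≠ 1) : χ ((1 - a) * (1 - b)) = χ (-1) := by
  have hb : χ b = 1 := by simpa [ha] using congrArg χ hab
  have hsq : χ ((1 - a) ^ 2) = 1 := apply_sq_of_sq_eq_one hχ (sub_ne_zero.mpr ha1.symm)
  have key : (1 - a) * (1 - b) = -1 * b * (1 - a) ^ 2 := by linear_combination (a - 1) * hab
  rw [key, map_mul, map_mul, hb, hsq, mul_one, mul_one]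

theorem apply_natCast_of_isPrimitiveRoot (hχ : χ ^ 2 = 1) {m : ℕ} {ζ : F}
    (hζ : IsPrimitiveRoot ζ (2 * m + 1)) : χ ((2 * m + 1 : ℕ) : F) = χ (-1) ^ m := by
  have hχζ : χ ζ = 1 := apply_eq_one_of_pow_eq_one hχ (odd_two_mul_add_one m) hζ.pow_eq_one
  have pair : ∀ k ∈ range m, χ ((1 - ζ ^ (k + 1)) * (1 - ζ ^ (2 * m - 1 - k + 1))) = χ (-1) := by
    intro k hk
    have hk := mem_range.mp hk
    refine apply_one_sub_mul_one_sub_of_mul_eq_one hχ ?_ (by rw [map_pow, hχζ, one_pow])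
      (hζ.pow_ne_one_of_pos_of_lt k.succ_ne_zero (by omega))
    rw [← pow_add, ← hζ.pow_eq_one]
    congr 1
    omega
  calc χ ((2 * m + 1 : ℕ) : F) = χ (∏ k ∈ range (2 * m), (1 - ζ ^ (k + 1))) := by
        rw [hζ.prod_one_sub_pow_eq_order]; push_cast; rfl
    _ = χ (-1) ^ m := by
        rw [map_prod, prod_range_two_mul_eq_prod_mul_reflect (fun k ↦ χ (1 - ζ ^ (k + 1))),
          prod_congr rfl fun k hk ↦ (map_mul χ _ _).symm.trans (pair k hk), prod_const,
          card_range]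

end Quadratic

variable {F R : Type*} [Field F] [Finite F] [CommRing R] [NoZeroDivisors R] {χ : MulChar F R}

theorem apply_of_not_isSquare (hχ1 : χ ≠ 1) (hχ : χ ^ 2 = 1) {a : F} (hsq : ¬IsSquare a) :
    χ a = -1 := by
  obtain ⟨g, hg⟩ := IsCyclic.exists_monoid_generator (α := Fˣ)
  have hg1 : χ g = -1 := by
    refine (mul_self_eq_one_iff.mp ?_).resolve_left fun h ↦ hχ1 (ext fun u ↦ ?_)
    · rw [← pow_two, ← pow_apply_coe, hχ, one_apply_coe]
    · obtain ⟨n, rfl⟩ := Submonoid.mem_powers_iff _ _ |>.mp (hg u)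
      rw [one_apply_coe, Units.val_pow_eq_pow_val, map_pow, h, one_pow]
  have ha0 : a ≠ 0 := by rintro rfl; exact hsq ⟨0, by simp⟩
  obtain ⟨n, hn⟩ := Submonoid.mem_powers_iff _ _ |>.mp (hg (Units.mk0 a ha0))
  have ha : a = (g : F) ^ n := by rw [← Units.val_pow_eq_pow_val, hn, Units.val_mk0]
  have hn_odd : Odd n := by
    refine Nat.not_even_iff_odd.mp fun ⟨t, ht⟩ ↦ hsq ⟨(g : F) ^ t, ?_⟩
    rw [ha, ht, pow_add]
  rw [ha, map_pow, hg1, hn_odd.neg_one_pow]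

theorem apply_neg_one_eq_ite [Decidable (IsSquare (-1 : F))] (hχ1 : χ ≠ 1) (hχ : χ ^ 2 = 1) :
    χ (-1) = if IsSquare (-1 : F) then 1 else -1 := by
  split_ifs with h
  · obtain ⟨b, hb⟩ := h
    have hb0 : b ≠ 0 := by rintro rfl; simp at hb
    rw [hb, ← pow_two, apply_sq_of_sq_eq_one hχ hb0]
  · exact apply_of_not_isSquare hχ1 hχ h

end MulChar

theorem stmt_7_general {K : Type*} [Field K] [Fintype K]
    (d : ℕ) (hd : Odd d) (hdvd : d ∣ Fintype.card K - 1)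
    (η : MulChar K ℂ) (hη : η ≠ 1) (hη2 : η ^ 2 = 1) :
    η ((d : K)) = (if IsSquare (-1 : K) then (1 : ℂ) else -1) ^ ((d - 1) / 2) := by
  obtain ⟨ζ, hζ⟩ := FiniteField.exists_isPrimitiveRoot hdvd
  obtain ⟨m, rfl⟩ := hd
  rw [η.apply_natCast_of_isPrimitiveRoot hη2 hζ, η.apply_neg_one_eq_ite hη hη2,
    show (2 * m + 1 - 1) / 2 = m by omega]

/-- For a finite field `K` of odd characteristic and `d` odd dividing `|K| - 1`,
`η_K(d) = sign(K)^((d-1)/2)`, `η_K` the quadratic character, `sign(K) = η_K(-1)`. -/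
theorem stmt_7 {K : Type*} [Field K] [Fintype K] (hchar : ringChar K ≠ 2)
    (d : ℕ) (hd : Odd d) (hdvd : d ∣ Fintype.card K - 1)
    (η : MulChar K ℂ) (hη : η ≠ 1) (hη2 : η ^ 2 = 1) :
    η ((d : K)) = (if IsSquare (-1 : K) then (1 : ℂ) else -1) ^ ((d - 1) / 2) :=
  stmt_7_general d hd hdvd η hη hη2
end

section
/- Let K be a finite field of odd characteristic, d an even natural number dividing |K|-1, and η_o a generator of the group of multiplicative characters of K trivial on d-th powers. Then η_o(-1)^{d(d-2)/8} = η_K(2d), where η_K is the quadratic character of K*. -/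
/-!
Write `d = 2a`, `q - 1 = d m`, and let `g` generate `Kˣ`, so `ζ = g ^ m` is a primitive `d`-th
root of unity with `ζ ^ a = -1`. From `∏_{0<j<d} (1 - ζ ^ j) = d`, pairing the factor of `a + j`
with that of `a - j` via `1 - ζ ^ (a + j) = ζ ^ j (1 - ζ ^ (a - j))` and noting the middle factor
is `1 - ζ ^ a = 2`, one gets `2d = ζ ^ (a(a-1)/2) y²` with `y ≠ 0`. Since `η g = -1` and `η_o g`
has order `d`, both sides of the claim equal `(-1) ^ (m · a(a-1)/2)`.
-/

open Finset

lemma MulChar.isPrimitiveRoot_apply_generator {R R' : Type*} [CommMonoid R]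
    [CommMonoidWithZero R'] {g : Rˣ} (hg : ∀ x, x ∈ Subgroup.zpowers g) (χ : MulChar R R') :
    IsPrimitiveRoot (χ g) (orderOf χ) := by
  have horder : orderOf (χ g) = orderOf χ := orderOf_eq_orderOf_iff.mpr fun n => by
    rw [eq_iff hg, pow_apply_coe, one_apply_coe]
  exact horder ▸ IsPrimitiveRoot.orderOf _

lemma IsPrimitiveRoot.pow_eq_neg_one {R : Type*} [CommRing R] [NoZeroDivisors R] {ζ : R} {a : ℕ}
    (h : IsPrimitiveRoot ζ (2 * a)) (ha : a ≠ 0) : ζ ^ a = -1 := by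
  have h2 := h.pow_of_dvd ha (dvd_mul_left a 2)
  rw [Nat.mul_div_cancel _ (Nat.pos_of_ne_zero ha)] at h2
  exact h2.eq_neg_one_of_two_right

lemma Finset.sum_range_id_add_one (b : ℕ) : ∑ k ∈ range b, (k + 1) = (b + 1) * b / 2 := by
  rw [← add_zero (∑ k ∈ range b, (k + 1)), ← sum_range_succ' (fun k => k), sum_range_id,
    Nat.add_sub_cancel]

lemma prod_range_one_sub_pow_of_pow_eq_neg_one {R : Type*} [CommRing R] {ζ : R} {b : ℕ}
    (h : ζ ^ (b + 1) = -1) :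
    ∏ k ∈ range (b + 1 + b), (1 - ζ ^ (k + 1)) =
      2 * ζ ^ ((b + 1) * b / 2) * (∏ k ∈ range b, (1 - ζ ^ (k + 1))) ^ 2 := by
  have hpair : ∀ k ∈ range b,
      1 - ζ ^ (b + 1 + k + 1) = ζ ^ (k + 1) * (1 - ζ ^ (b - 1 - k + 1)) := by
    intro k hk
    have hk : k + 1 + (b - 1 - k + 1) = b + 1 := by rw [mem_range] at hk; omega
    rw [mul_sub, ← pow_add, hk, h, add_assoc, pow_add, h]
    ring
  rw [prod_range_add, prod_range_succ, prod_congr rfl hpair, prod_mul_distrib,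
    prod_pow_eq_pow_sum, sum_range_id_add_one, prod_range_reflect (fun k => 1 - ζ ^ (k + 1)), h]
  ring

lemma IsPrimitiveRoot.exists_two_mul_eq_pow_mul_sq {K : Type*} [Field K] {ζ : K} {b : ℕ}
    (hζ : IsPrimitiveRoot ζ (2 * (b + 1))) :
    ∃ y : K, y ≠ 0 ∧ 2 * ((2 * (b + 1) : ℕ) : K) = ζ ^ ((b + 1) * b / 2) * y ^ 2 := by
  have hd : ((2 * (b + 1) : ℕ) : K) ≠ 0 := (hζ.neZero').out
  have h2 : (2 : K) ≠ 0 := by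
    rw [Nat.cast_mul, Nat.cast_two] at hd; exact left_ne_zero_of_mul hd
  have hζ' : IsPrimitiveRoot ζ (b + 1 + b + 1) := by rwa [show b + 1 + b + 1 = 2 * (b + 1) by ring]
  have hprod := hζ'.prod_one_sub_pow_eq_order
  rw [prod_range_one_sub_pow_of_pow_eq_neg_one (hζ.pow_eq_neg_one b.succ_ne_zero)] at hprod
  set Q := ∏ k ∈ range b, (1 - ζ ^ (k + 1))
  have hd_eq : 2 * ((2 * (b + 1) : ℕ) : K) = ζ ^ ((b + 1) * b / 2) * (2 * Q) ^ 2 := by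
    rw [show 2 * (b + 1) = b + 1 + b + 1 by ring, Nat.cast_succ, ← hprod]
    ring
  refine ⟨2 * Q, fun hQ => ?_, hd_eq⟩
  rw [hQ, zero_pow two_ne_zero, mul_zero] at hd_eq
  exact mul_ne_zero h2 hd hd_eq

theorem stmt_8_general {K : Type*} [Field K] [Fintype K]
    (d : ℕ) (hd : Even d) (hd0 : 0 < d) (hdvd : d ∣ Fintype.card K - 1)
    (η_o : MulChar K ℂ) (hord : orderOf η_o = d)
    (η : MulChar K ℂ) (hη : η ≠ 1) (hη2 : η ^ 2 = 1) :
    (η_o (-1 : K)) ^ (d * (d - 2) / 8) = η (((2 * d : ℕ) : K)) := by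
  classical
  obtain ⟨a, rfl⟩ := even_iff_two_dvd.mp hd
  obtain ⟨b, rfl⟩ := Nat.exists_eq_add_one_of_ne_zero (by omega : a ≠ 0)
  obtain ⟨m, hm⟩ := hdvd
  obtain ⟨g, hg⟩ := IsCyclic.exists_generator (α := Kˣ)
  have hg_prim : IsPrimitiveRoot (g : K) (Fintype.card K - 1) := by
    rw [IsPrimitiveRoot.coe_units_iff, ← Fintype.card_units, ← Nat.card_eq_fintype_card,
      ← orderOf_eq_card_of_forall_mem_zpowers hg]
    exact .orderOf g
  have hζ : IsPrimitiveRoot ((g : K) ^ m) (2 * (b + 1)) :=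
    hg_prim.pow (by have := Fintype.one_lt_card (α := K); omega) (hm.trans (mul_comm _ _))
  have hηg : η g = -1 :=
    (orderOf_eq_prime hη2 hη ▸ η.isPrimitiveRoot_apply_generator hg).eq_neg_one_of_two_right
  have hη_og : η_o g ^ (b + 1) = -1 :=
    (hord ▸ η_o.isPrimitiveRoot_apply_generator hg).pow_eq_neg_one b.succ_ne_zero
  obtain ⟨y, hy, h2d⟩ := hζ.exists_two_mul_eq_pow_mul_sq
  have hηy : η y ^ 2 = 1 := by
    rw [← η.pow_apply' two_ne_zero, hη2, MulChar.one_apply hy.isUnit]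
  have hexp : 2 * (b + 1) * (2 * (b + 1) - 2) / 8 = (b + 1) * b / 2 := by
    rw [show 2 * (b + 1) - 2 = 2 * b by omega,
      show 2 * (b + 1) * (2 * b) = 4 * ((b + 1) * b) by ring]
    omega
  calc η_o (-1) ^ (2 * (b + 1) * (2 * (b + 1) - 2) / 8)
      = ((-1) ^ m) ^ ((b + 1) * b / 2) := by
        rw [hexp, ← hζ.pow_eq_neg_one b.succ_ne_zero, ← pow_mul, map_pow, mul_comm, pow_mul,
          hη_og]
    _ = η ((2 * (2 * (b + 1)) : ℕ) : K) := by
        rw [Nat.cast_mul, Nat.cast_two, h2d, map_mul, map_pow η y, hηy, map_pow, map_pow, hηg,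
          mul_one]

/-- For a finite field `K` of odd characteristic, `d` even dividing `|K| - 1`, and
`η_o` a generator of the group of multiplicative characters trivial on `d`-th powers,
`η_o(-1)^(d(d-2)/8) = η_K(2d)`, where `η_K` is the quadratic character. -/
theorem stmt_8 {K : Type*} [Field K] [Fintype K] (hchar : ringChar K ≠ 2)
    (d : ℕ) (hd : Even d) (hd0 : 0 < d) (hdvd : d ∣ Fintype.card K - 1)
    (η_o : MulChar K ℂ) (hord : orderOf η_o = d)
    (hgen : ∀ η : MulChar K ℂ, η ^ d = 1 → ∃ k : ℕ, η = η_o ^ k)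
    (η : MulChar K ℂ) (hη : η ≠ 1) (hη2 : η ^ 2 = 1) :
    (η_o (-1 : K)) ^ (d * (d - 2) / 8) = η (((2 * d : ℕ) : K)) :=
  stmt_8_general d hd hd0 hdvd η_o hord η hη hη2
end

section
/- Let F be a p-adic field with normalized additive character ψ and let χ be a character of F* with conductor m = e(χ) ≥ 2; set k = ⌊m/2⌋. Then there exists a unique c ∈ O*/(1+P^k) such that ψ(cϖ^{-m}(x-1)) = χ(x)⁻¹ for all x ∈ 1+P^{m-k}. -/
private lemma descend_char {R : Type*} [CommRing R] (I : Ideal R) (f : R → ℂ)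
    (h0 : f 0 = 1) (hadd : ∀ a b, f (a + b) = f a * f b)
    (hI : ∀ a ∈ I, f a = 1) :
    ∃ g : AddChar (R ⧸ I) ℂ, ∀ a, g (Ideal.Quotient.mk I a) = f a := by
  have hconst : ∀ a b : R, a - b ∈ I → f a = f b := by
    intro a b hab
    have h1 : a = b + (a - b) := by ring
    rw [h1, hadd, hI _ hab, mul_one]
  set s : R ⧸ I → R := Function.surjInv Ideal.Quotient.mk_surjective with hs
  have hsec : ∀ q, Ideal.Quotient.mk I (s q) = q := fun q =>
    Function.surjInv_eq Ideal.Quotient.mk_surjective q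
  have hkey : ∀ a, f (s (Ideal.Quotient.mk I a)) = f a := by
    intro a
    apply hconst
    rw [← Ideal.Quotient.mk_eq_mk_iff_sub_mem]
    exact hsec _
  refine ⟨⟨fun q => f (s q), ?_, ?_⟩, hkey⟩
  · show f (s 0) = 1
    have : ((0 : R ⧸ I)) = Ideal.Quotient.mk I 0 := by simp
    rw [this, hkey, h0]
  · intro q r
    obtain ⟨a, rfl⟩ := Ideal.Quotient.mk_surjective q
    obtain ⟨b, rfl⟩ := Ideal.Quotient.mk_surjective r
    have : Ideal.Quotient.mk I a + Ideal.Quotient.mk I b = Ideal.Quotient.mk I (a + b) := by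
      rw [map_add]
    show f (s _) = f (s _) * f (s _)
    rw [this, hkey, hkey, hkey, hadd]

private lemma addchar_surj_of_field {κ : Type*} [Field κ] [Finite κ]
    (η : AddChar κ ℂ) (hη : η ≠ 1) (θ : AddChar κ ℂ) :
    ∃ b : κ, ∀ x, θ x = η (b * x) := by
  cases nonempty_fintype κ
  have hprim := AddChar.IsPrimitive.of_ne_one hη
  have hinj := AddChar.to_mulShift_inj_of_isPrimitive hprim
  have hbij : Function.Bijective η.mulShift :=
    (Fintype.bijective_iff_injective_and_card _).2 ⟨hinj, (AddChar.card_eq).symm⟩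
  obtain ⟨b, hb⟩ := hbij.surjective θ
  exact ⟨b, fun x => by rw [← hb, AddChar.mulShift_apply]⟩

/-- Let `F` be a p-adic field with ring of integers `O`, uniformizer `ϖ`, finite
residue field, normalized additive character `ψ`, and `χ` a character of `Fˣ` of
conductor `m ≥ 2`; set `k = ⌊m/2⌋`. Then there exists `c ∈ Oˣ`, unique modulo
`1 + P^k`, such that `ψ(cϖ^{-m}(x-1)) = χ(x)⁻¹` for all `x ∈ 1 + P^{m-k}`. -/
theorem stmt_14 {p : ℕ} [Fact p.Prime] {F : Type*} [Field F]
    [Algebra ℚ_[p] F] [FiniteDimensional ℚ_[p] F]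
    (O : Subring F) (ϖ : F)
    (hϖO : ϖ ∈ O) (hϖ0 : ϖ ≠ 0) (hϖnu : ϖ⁻¹ ∉ O)
    (hϖgen : ∀ x : F, x ∈ O → x⁻¹ ∉ O → x * ϖ⁻¹ ∈ O)
    (hval : ∀ x : F, x ≠ 0 → ∃ n : ℤ, x * (ϖ ^ n)⁻¹ ∈ O ∧ (x * (ϖ ^ n)⁻¹)⁻¹ ∈ O)
    (hfin : Finite (O ⧸ Ideal.span {(⟨ϖ, hϖO⟩ : O)}))
    (ψ : AddChar F ℂ)
    (hψO : ∀ x : F, x ∈ O → ψ x = 1)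
    (hψnt : ∃ x : F, ϖ * x ∈ O ∧ ψ x ≠ 1)
    (m : ℕ) (hm : 2 ≤ m) (k : ℕ) (hk : k = m / 2)
    (χ : F →* ℂ)
    (hχ : ∀ x : F, (x - 1) * (ϖ ^ m)⁻¹ ∈ O → χ x = 1)
    (hχ' : ∃ x : F, (x - 1) * (ϖ ^ (m - 1))⁻¹ ∈ O ∧ χ x ≠ 1) :
    ∃ c : F, (c ∈ O ∧ c⁻¹ ∈ O) ∧
      (∀ x : F, (x - 1) * (ϖ ^ (m - k))⁻¹ ∈ O →
        ψ (c * (x - 1) * (ϖ ^ m)⁻¹) = (χ x)⁻¹) ∧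
      (∀ c' : F, c' ∈ O → c'⁻¹ ∈ O →
        (∀ x : F, (x - 1) * (ϖ ^ (m - k))⁻¹ ∈ O →
          ψ (c' * (x - 1) * (ϖ ^ m)⁻¹) = (χ x)⁻¹) →
        (c' * c⁻¹ - 1) * (ϖ ^ k)⁻¹ ∈ O) := by
  -- numeric facts
  have h2k : 2 * k ≤ m := by omega
  have hk1 : 1 ≤ k := by omega
  -- power basics
  have hpow : ∀ n : ℕ, ϖ ^ n ∈ O := fun n => pow_mem hϖO n
  have hpn0 : ∀ n : ℕ, (ϖ : F) ^ n ≠ 0 := fun n => pow_ne_zero n hϖ0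
  -- units of O
  have hunit : ∀ x : F, x ∈ O → x * ϖ⁻¹ ∉ O → x⁻¹ ∈ O := by
    intro x hx h
    by_contra h'
    exact h (hϖgen x hx h')
  -- monotonicity of the filtration
  have hmono : ∀ (x : F) (n n' : ℕ), n' ≤ n → x * (ϖ ^ n)⁻¹ ∈ O → x * (ϖ ^ n')⁻¹ ∈ O := by
    intro x n n' hle hx
    have hpowsplit : (ϖ : F) ^ n = ϖ ^ n' * ϖ ^ (n - n') := by
      rw [← pow_add]; congr 1; omega
    have : x * (ϖ ^ n')⁻¹ = x * (ϖ ^ n)⁻¹ * ϖ ^ (n - n') := by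
      rw [hpowsplit]
      field_simp
    rw [this]
    exact mul_mem hx (hpow _)
  have hmemO : ∀ (x : F) (n : ℕ), x * (ϖ ^ n)⁻¹ ∈ O → x ∈ O := by
    intro x n hx
    have := hmono x n 0 (Nat.zero_le n) hx
    simpa using this
  -- 1 + t facts for t ∈ P
  have houp : ∀ t : F, t * ϖ⁻¹ ∈ O → (1 + t) ≠ 0 ∧ (1 + t)⁻¹ ∈ O := by
    intro t ht
    have htO : t ∈ O := by
      have : t = t * ϖ⁻¹ * ϖ := by field_simp
      rw [this]; exact mul_mem ht hϖO
    have hne : (1 + t) ≠ 0 := by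
      intro h
      have ht1 : t = -1 := by linear_combination h
      rw [ht1] at ht
      have : (ϖ : F)⁻¹ ∈ O := by
        have := neg_mem ht
        simpa using this
      exact hϖnu this
    refine ⟨hne, ?_⟩
    apply hunit _ (add_mem (one_mem O) htO)
    intro h
    have : (ϖ : F)⁻¹ ∈ O := by
      have h2 : (1 + t) * ϖ⁻¹ = ϖ⁻¹ + t * ϖ⁻¹ := by ring
      rw [h2] at h
      have := sub_mem h ht
      simpa using this
    exact hϖnu this
  -- ψ never vanishes
  have hψ0 : ∀ t : F, ψ t ≠ 0 := fun t => (ψ.val_isUnit t).ne_zero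
  -- χ doesn't vanish on 1 + P
  have hχne : ∀ t : F, t * ϖ⁻¹ ∈ O → χ (1 + t) ≠ 0 := by
    intro t ht
    obtain ⟨hne, -⟩ := houp t ht
    intro h
    have h1 : χ (1 + t) * χ (1 + t)⁻¹ = 1 := by
      rw [← map_mul, mul_inv_cancel₀ hne, map_one]
    rw [h, zero_mul] at h1
    exact zero_ne_one h1
  -- the residue field
  set I : Ideal O := Ideal.span {(⟨ϖ, hϖO⟩ : O)} with hI
  have hdvd : ∀ x : O, ((⟨ϖ, hϖO⟩ : O) ∣ x ↔ (x : F) * ϖ⁻¹ ∈ O) := by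
    intro x
    constructor
    · rintro ⟨o, rfl⟩
      have : ((⟨ϖ, hϖO⟩ * o : O) : F) * ϖ⁻¹ = (o : F) := by
        push_cast
        field_simp
      rw [this]
      exact o.2
    · intro h
      refine ⟨⟨(x : F) * ϖ⁻¹, h⟩, ?_⟩
      ext
      push_cast
      field_simp
  have hmemI : ∀ x : O, x ∈ I ↔ (x : F) * ϖ⁻¹ ∈ O := by
    intro x
    rw [hI, Ideal.mem_span_singleton]
    exact hdvd x
  have hImax : I.IsMaximal := by
    rw [Ideal.isMaximal_iff]
    constructor
    · intro h
      rw [hmemI] at h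
      simp only [OneMemClass.coe_one, one_mul] at h
      exact hϖnu h
    · intro J x hIJ hx hxJ
      rw [hmemI] at hx
      have hx0 : (x : F) ≠ 0 := by
        intro h
        apply hx
        rw [h, zero_mul]
        exact zero_mem O
      have hxi : (x : F)⁻¹ ∈ O := hunit _ x.2 hx
      have h1 : (1 : O) = ⟨(x : F)⁻¹, hxi⟩ * x := by
        ext; push_cast; rw [inv_mul_cancel₀ hx0]
      rw [h1]
      exact Ideal.mul_mem_left J _ hxJ
  haveI := hImax
  letI : Field (O ⧸ I) := Ideal.Quotient.field I
  haveI : Finite (O ⧸ I) := hfin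
  -- the character η of the residue field
  have hη_ex : ∃ η : AddChar (O ⧸ I) ℂ,
      ∀ a : O, η (Ideal.Quotient.mk I a) = ψ (ϖ⁻¹ * (a : F)) := by
    apply descend_char I (fun a => ψ (ϖ⁻¹ * (a : F)))
    · simp
    · intro a b
      push_cast
      rw [mul_add, ψ.map_add_eq_mul]
    · intro a ha
      rw [hmemI] at ha
      apply hψO
      have : (ϖ : F)⁻¹ * (a : F) = (a : F) * ϖ⁻¹ := by ring
      rw [this]
      exact ha
  obtain ⟨η, hη⟩ := hη_ex
  obtain ⟨x₀, hx₀O, hx₀⟩ := hψnt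
  have hηne : η ≠ 1 := by
    intro h
    apply hx₀
    have h1 : η (Ideal.Quotient.mk I ⟨ϖ * x₀, hx₀O⟩) = ψ (ϖ⁻¹ * (ϖ * x₀)) := hη _
    rw [h] at h1
    have h2 : (ϖ : F)⁻¹ * (ϖ * x₀) = x₀ := by field_simp
    rw [h2] at h1
    simpa using h1.symm
  -- the inductive construction of c
  have main : ∀ j : ℕ, j ≤ k → ∃ c : F, c ∈ O ∧
      ∀ y : F, y * (ϖ ^ (m - j))⁻¹ ∈ O → ψ (c * y * (ϖ ^ m)⁻¹) = (χ (1 + y))⁻¹ := by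
    intro j
    induction j with
    | zero =>
      intro _
      refine ⟨1, one_mem O, ?_⟩
      intro y hy
      rw [Nat.sub_zero] at hy
      have h1 : (1 : F) + y - 1 = y := by ring
      rw [one_mul, hψO _ hy, hχ (1 + y) (by rw [h1]; exact hy), inv_one]
    | succ j ih =>
      intro hj1
      obtain ⟨c, hc, hQ⟩ := ih (by omega)
      set s := m - j - 1 with hsdef
      have hs1 : 1 ≤ s := by omega
      have hsub : m - (j + 1) = s := by omega
      have hargeq : ∀ z a : F, z * (ϖ ^ s * a) * (ϖ ^ m)⁻¹ = z * a * (ϖ ^ (j + 1))⁻¹ := by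
        intro z a
        have hppow : (ϖ : F) ^ m = ϖ ^ s * ϖ ^ (j + 1) := by
          rw [← pow_add]; congr 1; omega
        rw [hppow]
        field_simp
      have hP1 : ∀ x : F, x ∈ O → (ϖ ^ s * x) * ϖ⁻¹ ∈ O := by
        intro x hx
        have h1 : (ϖ : F) ^ s = ϖ ^ (s - 1) * ϖ := by rw [← pow_succ]; congr 1; omega
        have h2 : (ϖ ^ s * x) * ϖ⁻¹ = ϖ ^ (s - 1) * x := by
          rw [h1]; field_simp
        rw [h2]
        exact mul_mem (hpow _) hx
      set f : O → ℂ := fun a => χ (1 + ϖ ^ s * (a : F)) * ψ (c * (a : F) * (ϖ ^ (j + 1))⁻¹)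
        with hfdef
      have hf0 : f 0 = 1 := by rw [hfdef]; simp
      have hfadd : ∀ a b : O, f (a + b) = f a * f b := by
        intro a b
        rw [hfdef]
        simp only
        push_cast
        have hψpart : ψ (c * ((a : F) + (b : F)) * (ϖ ^ (j + 1))⁻¹) =
            ψ (c * (a : F) * (ϖ ^ (j + 1))⁻¹) * ψ (c * (b : F) * (ϖ ^ (j + 1))⁻¹) := by
          rw [← ψ.map_add_eq_mul]; congr 1; ring
        have hχpart : χ (1 + ϖ ^ s * ((a : F) + (b : F))) =
            χ (1 + ϖ ^ s * (a : F)) * χ (1 + ϖ ^ s * (b : F)) := by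
          have hvmem := hP1 _ (add_mem a.2 b.2)
          obtain ⟨hv0, hvinv⟩ := houp _ hvmem
          set v : F := 1 + ϖ ^ s * ((a : F) + (b : F)) with hvdef
          set E : F := ϖ ^ (2 * s - m) * (a : F) * (b : F) with hEdef
          have hEO : E ∈ O := mul_mem (mul_mem (hpow _) a.2) b.2
          have h3 : (ϖ : F) ^ (2 * s - m) * ϖ ^ m = ϖ ^ s * ϖ ^ s := by
            rw [← pow_add, ← pow_add]; congr 1; omega
          have hu : (1 + ϖ ^ s * (a : F)) * (1 + ϖ ^ s * (b : F)) =
              v * (1 + E * v⁻¹ * ϖ ^ m) := by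
            have h1 : v * (1 + E * v⁻¹ * ϖ ^ m) = v + E * ϖ ^ m * (v * v⁻¹) := by ring
            rw [h1, mul_inv_cancel₀ hv0, mul_one, hvdef, hEdef]
            linear_combination (-((a : F) * (b : F))) * h3
          have hw1 : χ (1 + E * v⁻¹ * ϖ ^ m) = 1 := by
            apply hχ
            have h4 : (1 + E * v⁻¹ * ϖ ^ m - 1) * (ϖ ^ m)⁻¹ =
                E * v⁻¹ * (ϖ ^ m * (ϖ ^ m)⁻¹) := by ring
            rw [h4, mul_inv_cancel₀ (hpn0 m), mul_one]
            exact mul_mem hEO hvinv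
          rw [← map_mul, hu, map_mul, hw1, mul_one]
        rw [hψpart, hχpart]
        ring
      have hftriv : ∀ a ∈ I, f a = 1 := by
        intro a ha
        rw [hmemI] at ha
        have hy : (ϖ ^ s * (a : F)) * (ϖ ^ (m - j))⁻¹ ∈ O := by
          have hmj : m - j = s + 1 := by omega
          rw [hmj]
          have h5 : (ϖ ^ s * (a : F)) * (ϖ ^ (s + 1))⁻¹ = (a : F) * ϖ⁻¹ := by
            rw [pow_succ]; field_simp
          rw [h5]
          exact ha
        have hQy := hQ _ hy
        rw [hargeq c (a : F)] at hQy
        rw [hfdef]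
        simp only
        rw [hQy]
        exact mul_inv_cancel₀ (hχne _ (hP1 _ a.2))
      obtain ⟨θ, hθ⟩ := descend_char I f hf0 hfadd hftriv
      obtain ⟨bq, hbq⟩ := addchar_surj_of_field η hηne θ
      obtain ⟨b, rfl⟩ := Ideal.Quotient.mk_surjective bq
      have hfa : ∀ a : O, χ (1 + ϖ ^ s * (a : F)) * ψ (c * (a : F) * (ϖ ^ (j + 1))⁻¹) =
          ψ (ϖ⁻¹ * ((b : F) * (a : F))) := by
        intro a
        have h6 : θ (Ideal.Quotient.mk I a) = ψ (ϖ⁻¹ * ((b : F) * (a : F))) := by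
          rw [hbq, ← map_mul, hη]
          push_cast
          ring_nf
        rw [← h6, hθ a, hfdef]
      refine ⟨c - ϖ ^ j * (b : F), sub_mem hc (mul_mem (hpow j) b.2), ?_⟩
      intro y hy
      rw [hsub] at hy
      have hfa' := hfa ⟨y * (ϖ ^ s)⁻¹, hy⟩
      have hcoe : (((⟨y * (ϖ ^ s)⁻¹, hy⟩ : O)) : F) = y * (ϖ ^ s)⁻¹ := rfl
      rw [hcoe] at hfa'
      have hya : ϖ ^ s * (y * (ϖ ^ s)⁻¹) = y := by field_simp
      rw [hya] at hfa'
      have hppow : (ϖ : F) ^ m = ϖ ^ s * ϖ ^ (j + 1) := by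
        rw [← pow_add]; congr 1; omega
      have hppow' : (ϖ : F) ^ m = ϖ ^ j * ϖ ^ s * ϖ := by
        rw [mul_assoc, ← pow_succ, ← pow_add]; congr 1; omega
      have e1 : c * (y * (ϖ ^ s)⁻¹) * (ϖ ^ (j + 1))⁻¹ = c * y * (ϖ ^ m)⁻¹ := by
        rw [hppow]
        field_simp
      have e2 : (ϖ : F)⁻¹ * ((b : F) * (y * (ϖ ^ s)⁻¹)) = ϖ ^ j * (b : F) * y * (ϖ ^ m)⁻¹ := by
        rw [hppow']
        field_simp
      rw [e1, e2] at hfa'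
      have hsplit : (c - ϖ ^ j * (b : F)) * y * (ϖ ^ m)⁻¹ =
          c * y * (ϖ ^ m)⁻¹ - ϖ ^ j * (b : F) * y * (ϖ ^ m)⁻¹ := by ring
      rw [hsplit]
      have hψsub : ∀ A B : F, ψ (A - B) = ψ A * (ψ B)⁻¹ := by
        intro A B
        have h7 : ψ (A - B) * ψ B = ψ A := by
          rw [← ψ.map_add_eq_mul]; congr 1; ring
        field_simp [hψ0 B]
        linear_combination h7
      rw [hψsub, ← hfa']
      have hS := hψ0 (c * y * (ϖ ^ m)⁻¹)
      have h8 : ψ (c * y * (ϖ ^ m)⁻¹) *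
          (χ (1 + y) * ψ (c * y * (ϖ ^ m)⁻¹))⁻¹ =
          (χ (1 + y))⁻¹ *
          (ψ (c * y * (ϖ ^ m)⁻¹) * (ψ (c * y * (ϖ ^ m)⁻¹))⁻¹) := by
        rw [mul_inv]; ring
      rw [h8, mul_inv_cancel₀ hS, mul_one]
  obtain ⟨c, hc, hQ⟩ := main k le_rfl
  -- the main property in `x`-form
  have hmain : ∀ x : F, (x - 1) * (ϖ ^ (m - k))⁻¹ ∈ O →
      ψ (c * (x - 1) * (ϖ ^ m)⁻¹) = (χ x)⁻¹ := by
    intro x hx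
    have h1 : (1 : F) + (x - 1) = x := by ring
    have := hQ (x - 1) hx
    rw [h1] at this
    exact this
  -- c is a unit
  have hcu : c * ϖ⁻¹ ∉ O := by
    intro hcP
    obtain ⟨x₁, hx₁, hχx₁⟩ := hχ'
    apply hχx₁
    have hx₁' : (x₁ - 1) * (ϖ ^ (m - k))⁻¹ ∈ O := hmono _ _ _ (by omega) hx₁
    have h2 := hmain x₁ hx₁'
    have hppow : (ϖ : F) ^ m = ϖ * ϖ ^ (m - 1) := by
      rw [← pow_succ']; congr 1; omega
    have hmem : c * (x₁ - 1) * (ϖ ^ m)⁻¹ ∈ O := by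
      have h3 : c * (x₁ - 1) * (ϖ ^ m)⁻¹ = (c * ϖ⁻¹) * ((x₁ - 1) * (ϖ ^ (m - 1))⁻¹) := by
        rw [hppow]
        field_simp
      rw [h3]
      exact mul_mem hcP hx₁
    rw [hψO _ hmem] at h2
    rw [← inv_inv (χ x₁), ← h2, inv_one]
  have hc0 : c ≠ 0 := by
    intro h
    apply hcu
    rw [h, zero_mul]
    exact zero_mem O
  have hcinv : c⁻¹ ∈ O := hunit c hc hcu
  refine ⟨c, ⟨hc, hcinv⟩, hmain, ?_⟩
  -- uniqueness
  intro c' hc'O hc'i hprop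
  have hψsub : ∀ A B : F, ψ A = ψ B → ψ (A - B) = 1 := by
    intro A B hAB
    have h7 : ψ (A - B) * ψ B = ψ B := by
      rw [← ψ.map_add_eq_mul]
      rw [show A - B + B = A by ring, hAB]
    have := mul_right_cancel₀ (hψ0 B) (h7.trans (one_mul (ψ B)).symm)
    exact this
  have hdk : (c' - c) * (ϖ ^ k)⁻¹ ∈ O := by
    have htriv : ∀ y : F, y * (ϖ ^ (m - k))⁻¹ ∈ O → ψ ((c' - c) * y * (ϖ ^ m)⁻¹) = 1 := by
      intro y hy
      have h1 : (1 : F) + y - 1 = y := by ring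
      have ha := hmain (1 + y) (by rw [h1]; exact hy)
      have hb := hprop (1 + y) (by rw [h1]; exact hy)
      rw [h1] at ha hb
      have h2 : (c' - c) * y * (ϖ ^ m)⁻¹ = c' * y * (ϖ ^ m)⁻¹ - c * y * (ϖ ^ m)⁻¹ := by ring
      rw [h2]
      exact hψsub _ _ (hb.trans ha.symm)
    by_cases hd : c' - c = 0
    · rw [hd, zero_mul]
      exact zero_mem O
    · obtain ⟨n, hu, hui⟩ := hval (c' - c) hd
      have hzn0 : ∀ t : ℤ, (ϖ : F) ^ t ≠ 0 := fun t => zpow_ne_zero t hϖ0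
      have hdu : c' - c = (c' - c) * (ϖ ^ n)⁻¹ * ϖ ^ n := by
        rw [mul_assoc, inv_mul_cancel₀ (hzn0 n), mul_one]
      have hu0 : (c' - c) * (ϖ ^ n)⁻¹ ≠ 0 := mul_ne_zero hd (inv_ne_zero (hzn0 n))
      by_cases hnk : (k : ℤ) ≤ n
      · have h5 : (c' - c) * (ϖ ^ k)⁻¹ =
            ((c' - c) * (ϖ ^ n)⁻¹) * ϖ ^ ((n - (k : ℤ)).toNat) := by
          rw [mul_assoc]
          congr 1
          rw [← zpow_natCast ϖ ((n - (k : ℤ)).toNat), Int.toNat_of_nonneg (by omega),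
            ← zpow_natCast ϖ k, ← zpow_neg, ← zpow_neg, ← zpow_add₀ hϖ0]
          congr 1
          omega
        rw [h5]
        exact mul_mem hu (hpow _)
      · exfalso
        push_neg at hnk
        set u : F := (c' - c) * (ϖ ^ n)⁻¹ with hudef
        set y : F := (ϖ * x₀) * u⁻¹ * ϖ ^ ((m : ℤ) - n - 1) with hydef
        have hy : y * (ϖ ^ (m - k))⁻¹ ∈ O := by
          have h6 : y * (ϖ ^ (m - k))⁻¹ =
              (ϖ * x₀) * u⁻¹ * ϖ ^ (((k : ℤ) - n - 1).toNat) := by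
            have hz : (ϖ : F) ^ ((m : ℤ) - n - 1) * ((ϖ : F) ^ (m - k))⁻¹ =
                ϖ ^ (((k : ℤ) - n - 1).toNat) := by
              rw [← zpow_natCast ϖ (((k : ℤ) - n - 1).toNat), Int.toNat_of_nonneg (by omega),
                ← zpow_natCast ϖ (m - k), ← zpow_neg, ← zpow_add₀ hϖ0]
              congr 1
              omega
            rw [hydef, mul_assoc ((ϖ * x₀) * u⁻¹) (ϖ ^ ((m : ℤ) - n - 1)) ((ϖ ^ (m - k))⁻¹), hz]
          rw [h6]
          exact mul_mem (mul_mem hx₀O hui) (hpow _)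
        have harg : (c' - c) * y * (ϖ ^ m)⁻¹ = x₀ := by
          rw [hydef]
          have h7 : (c' - c) * ((ϖ * x₀) * u⁻¹ * ϖ ^ ((m : ℤ) - n - 1)) * (ϖ ^ m)⁻¹ =
              x₀ * ((c' - c) * u⁻¹) * (ϖ * ϖ ^ ((m : ℤ) - n - 1) * (ϖ ^ m)⁻¹) := by ring
          rw [h7]
          have h8 : (c' - c) * u⁻¹ = ϖ ^ n := by
            rw [hudef]
            field_simp
          have h9 : (ϖ : F) * ϖ ^ ((m : ℤ) - n - 1) * (ϖ ^ m)⁻¹ = ϖ ^ (-n : ℤ) := by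
            rw [mul_comm (ϖ : F) (ϖ ^ ((m : ℤ) - n - 1)), ← zpow_add_one₀ hϖ0,
              ← zpow_natCast ϖ m, ← zpow_neg, ← zpow_add₀ hϖ0]
            congr 1
            omega
          rw [h8, h9]
          have h11 : (ϖ : F) ^ n * ϖ ^ (-n : ℤ) = 1 := by
            rw [← zpow_add₀ hϖ0]
            norm_num
          calc x₀ * (ϖ ^ n) * ϖ ^ (-n : ℤ) = x₀ * ((ϖ : F) ^ n * ϖ ^ (-n : ℤ)) := by ring
            _ = x₀ := by rw [h11, mul_one]
        have := htriv y hy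
        rw [harg] at this
        exact hx₀ this
  have h12 : (c' * c⁻¹ - 1) * (ϖ ^ k)⁻¹ = ((c' - c) * (ϖ ^ k)⁻¹) * c⁻¹ := by
    have h13 : c' * c⁻¹ - 1 = (c' - c) * c⁻¹ := by
      rw [sub_mul, mul_inv_cancel₀ hc0]
    rw [h13]; ring
  rw [h12]
  exact mul_mem hdk hcinv
end

section
/- Let F be a p-adic field with normalized ψ and χ of conductor m ≥ 2, k = ⌊m/2⌋, and let c_{χ,ψ} ∈ O*/(1+P^k) be the unique element with h_{ψ_{c_{χ,ψ}}} = χ⁻¹ on 1+P^{m-k}. Then for any integer l with χ^l still of conductor m, c_{χ^l, ψ_l} = c_{χ,ψ}, and for a ∈ O*, c_{χ, ψ_a} = a⁻¹ c_{χ,ψ}. -/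
/-!
Since `ψ` is trivial on `O` but not on `P⁻¹`, the pairing `(b, x) ↦ ψ(b ϖ^{-m} (x - 1))` is
perfect enough to detect `P^k`: if it is trivial for all `x ∈ 1 + P^{m-k}` (substitute
`x = 1 + ϖ^{m-k} t`), then `b ∈ P^k`. Comparing the defining relations of `c_{χ,ψ}` and
`c_{χ^l,ψ_l}` gives `l (c' - c) ∈ P^k`, and `l` is a unit of `O` since otherwise `χ^l`, which is
`x ↦ ψ(-l c ϖ^{-m} (x - 1))` on `1 + P^{m-1}`, would be trivial there. Likewise
`a c' - c ∈ P^k` for `c' = c_{χ,ψ_a}`.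
-/

theorem AddChar.map_sub_eq_one_of_map_eq {A M : Type*} [AddGroup A] [Monoid M]
    (ψ : AddChar A M) {a b : A} (h : ψ a = ψ b) : ψ (a - b) = 1 := by
  rw [sub_eq_add_neg, map_add_eq_mul, h, ← map_add_eq_mul, add_neg_cancel, map_zero_eq_one]

section

variable {F : Type*} [Field F] (O : Subring F) {ϖ : F}

theorem mul_inv_pow_mem_of_le (hϖO : ϖ ∈ O) (hϖ0 : ϖ ≠ 0) {i j : ℕ} (hij : i ≤ j) {y : F}
    (hy : y * (ϖ ^ j)⁻¹ ∈ O) : y * (ϖ ^ i)⁻¹ ∈ O := by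
  obtain ⟨d, rfl⟩ := Nat.exists_eq_add_of_le hij
  have h : y * (ϖ ^ i)⁻¹ = y * (ϖ ^ (i + d))⁻¹ * ϖ ^ d := by
    rw [pow_add]
    field_simp
  rw [h]
  exact O.mul_mem hy (O.pow_mem hϖO d)

theorem mul_inv_sub_one_mul_mem {u v d : F} (hv : v ≠ 0) (hv' : v⁻¹ ∈ O)
    (h : (u - v) * d ∈ O) : (u * v⁻¹ - 1) * d ∈ O := by
  have h' : (u * v⁻¹ - 1) * d = v⁻¹ * ((u - v) * d) := by
    field_simp
  rw [h']
  exact O.mul_mem hv' h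

theorem inv_mem_of_notMem (hϖO : ϖ ∈ O) (hϖ0 : ϖ ≠ 0)
    (hval : ∀ x : F, x ≠ 0 → ∃ n : ℤ, x * (ϖ ^ n)⁻¹ ∈ O ∧ (x * (ϖ ^ n)⁻¹)⁻¹ ∈ O)
    {s : F} (hs : s ∉ O) : s⁻¹ ∈ O := by
  obtain ⟨n, hu, hu'⟩ := hval s (by rintro rfl; exact hs O.zero_mem)
  obtain ⟨j, rfl | rfl⟩ := n.eq_nat_or_neg
  · have h : s = s * (ϖ ^ (j : ℤ))⁻¹ * ϖ ^ j := by
      simp [hϖ0]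
    exact absurd (h ▸ O.mul_mem hu (O.pow_mem hϖO j)) hs
  · have h : s⁻¹ = (s * (ϖ ^ (-j : ℤ))⁻¹)⁻¹ * ϖ ^ j := by
      simp only [zpow_neg, zpow_natCast, inv_inv, mul_inv]
      field_simp
    rw [h]
    exact O.mul_mem hu' (O.pow_mem hϖO j)

theorem mem_of_forall_addChar_mul_eq_one {M : Type*} [Monoid M] (ψ : AddChar F M)
    (hϖO : ϖ ∈ O) (hϖ0 : ϖ ≠ 0) (hϖgen : ∀ x : F, x ∈ O → x⁻¹ ∉ O → x * ϖ⁻¹ ∈ O)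
    (hval : ∀ x : F, x ≠ 0 → ∃ n : ℤ, x * (ϖ ^ n)⁻¹ ∈ O ∧ (x * (ϖ ^ n)⁻¹)⁻¹ ∈ O)
    (hψnt : ∃ x : F, ϖ * x ∈ O ∧ ψ x ≠ 1) {s : F} (hs : ∀ t ∈ O, ψ (s * t) = 1) : s ∈ O := by
  by_contra hsO
  have hs0 : s ≠ 0 := by
    rintro rfl
    exact hsO O.zero_mem
  have hsϖ : s⁻¹ * ϖ⁻¹ ∈ O :=
    hϖgen _ (inv_mem_of_notMem O hϖO hϖ0 hval hsO) (by rwa [inv_inv])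
  obtain ⟨x, hx, hψx⟩ := hψnt
  have h : x = s * (s⁻¹ * ϖ⁻¹ * (ϖ * x)) := by
    field_simp
  exact hψx (h ▸ hs _ (O.mul_mem hsϖ hx))

theorem sub_mul_inv_pow_mem_of_addChar_eq {M : Type*} [Monoid M] (ψ : AddChar F M)
    (hϖO : ϖ ∈ O) (hϖ0 : ϖ ≠ 0) (hϖgen : ∀ x : F, x ∈ O → x⁻¹ ∉ O → x * ϖ⁻¹ ∈ O)
    (hval : ∀ x : F, x ≠ 0 → ∃ n : ℤ, x * (ϖ ^ n)⁻¹ ∈ O ∧ (x * (ϖ ^ n)⁻¹)⁻¹ ∈ O)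
    (hψnt : ∃ x : F, ϖ * x ∈ O ∧ ψ x ≠ 1) {m k : ℕ} (hkm : k ≤ m) (b₁ b₂ : F)
    (h : ∀ x : F, (x - 1) * (ϖ ^ (m - k))⁻¹ ∈ O →
      ψ (b₁ * (x - 1) * (ϖ ^ m)⁻¹) = ψ (b₂ * (x - 1) * (ϖ ^ m)⁻¹)) :
    (b₁ - b₂) * (ϖ ^ k)⁻¹ ∈ O := by
  obtain ⟨d, rfl⟩ := Nat.exists_eq_add_of_le hkm
  refine mem_of_forall_addChar_mul_eq_one O ψ hϖO hϖ0 hϖgen hval hψnt fun t ht => ?_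
  have hx : (1 + ϖ ^ d * t - 1) * (ϖ ^ (k + d - k))⁻¹ = t := by
    rw [Nat.add_sub_cancel_left]
    field_simp
    ring
  have hb : ∀ b : F, b * (1 + ϖ ^ d * t - 1) * (ϖ ^ (k + d))⁻¹ = b * (ϖ ^ k)⁻¹ * t := by
    intro b
    rw [pow_add]
    field_simp
    ring
  have hψ := h (1 + ϖ ^ d * t) (hx.symm ▸ ht)
  rw [hb, hb] at hψ
  rw [sub_mul, sub_mul]
  exact ψ.map_sub_eq_one_of_map_eq hψ

theorem intCast_mul_inv_notMem {M : Type*} [DivisionMonoid M] (ψ : AddChar F M) (χ : F → M)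
    (hψO : ∀ x ∈ O, ψ x = 1) {m : ℕ} (hm : 1 ≤ m) {c : F} (hcO : c ∈ O)
    (hc : ∀ x : F, (x - 1) * (ϖ ^ (m - 1))⁻¹ ∈ O → ψ (c * (x - 1) * (ϖ ^ m)⁻¹) = (χ x)⁻¹)
    {l : ℤ} (hl : ∃ x : F, (x - 1) * (ϖ ^ (m - 1))⁻¹ ∈ O ∧ χ x ^ l ≠ 1) :
    (l : F) * ϖ⁻¹ ∉ O := by
  intro hlO
  obtain ⟨x, hx, hne⟩ := hl
  obtain ⟨n, rfl⟩ := Nat.exists_eq_add_of_le' hm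
  rw [Nat.add_sub_cancel] at hx hc
  have hmem : (-l) • (c * (x - 1) * (ϖ ^ (n + 1))⁻¹) ∈ O := by
    have h : (-l) • (c * (x - 1) * (ϖ ^ (n + 1))⁻¹) =
        -((l : F) * ϖ⁻¹ * ((x - 1) * (ϖ ^ n)⁻¹) * c) := by
      rw [zsmul_eq_mul, pow_succ]
      push_cast
      ring
    rw [h]
    exact O.neg_mem (O.mul_mem (O.mul_mem hlO hx) hcO)
  apply hne
  calc χ x ^ l = (χ x)⁻¹ ^ (-l) := by rw [inv_zpow', neg_neg]
    _ = 1 := by rw [← hc x hx, ← ψ.map_zsmul_eq_zpow, hψO _ hmem]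

end

theorem stmt_15_general {F : Type*} [Field F]
    (O : Subring F) (ϖ : F)
    (hϖO : ϖ ∈ O) (hϖ0 : ϖ ≠ 0)
    (hϖgen : ∀ x : F, x ∈ O → x⁻¹ ∉ O → x * ϖ⁻¹ ∈ O)
    (hval : ∀ x : F, x ≠ 0 → ∃ n : ℤ, x * (ϖ ^ n)⁻¹ ∈ O ∧ (x * (ϖ ^ n)⁻¹)⁻¹ ∈ O)
    (ψ : AddChar F ℂ)
    (hψO : ∀ x : F, x ∈ O → ψ x = 1)
    (hψnt : ∃ x : F, ϖ * x ∈ O ∧ ψ x ≠ 1)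
    (m : ℕ) (hm : 2 ≤ m) (k : ℕ) (hk : k = m / 2)
    (χ : F →* ℂ)
    (hχ' : ∃ x : F, (x - 1) * (ϖ ^ (m - 1))⁻¹ ∈ O ∧ χ x ≠ 1)
    (c : F) (hcO : c ∈ O) (hcu : c⁻¹ ∈ O)
    (hc : ∀ x : F, (x - 1) * (ϖ ^ (m - k))⁻¹ ∈ O →
      ψ (c * (x - 1) * (ϖ ^ m)⁻¹) = (χ x)⁻¹) :
    (∀ l : ℤ,
      (∃ x : F, (x - 1) * (ϖ ^ (m - 1))⁻¹ ∈ O ∧ (χ x) ^ l ≠ 1) →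
      ∀ c' : F, c' ∈ O → c'⁻¹ ∈ O →
        (∀ x : F, (x - 1) * (ϖ ^ (m - k))⁻¹ ∈ O →
          ψ ((l : F) * (c' * (x - 1) * (ϖ ^ m)⁻¹)) = ((χ x) ^ l)⁻¹) →
        (c' * c⁻¹ - 1) * (ϖ ^ k)⁻¹ ∈ O) ∧
    (∀ a : F, a ∈ O → a⁻¹ ∈ O →
      ∀ c' : F, c' ∈ O → c'⁻¹ ∈ O →
        (∀ x : F, (x - 1) * (ϖ ^ (m - k))⁻¹ ∈ O →
          ψ (a * (c' * (x - 1) * (ϖ ^ m)⁻¹)) = (χ x)⁻¹) →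
        (c' * (a⁻¹ * c)⁻¹ - 1) * (ϖ ^ k)⁻¹ ∈ O) := by
  have hc₁ : ∀ x : F, (x - 1) * (ϖ ^ (m - 1))⁻¹ ∈ O →
      ψ (c * (x - 1) * (ϖ ^ m)⁻¹) = (χ x)⁻¹ :=
    fun x hx => hc x (mul_inv_pow_mem_of_le O hϖO hϖ0 (by omega) hx)
  have hc0 : c ≠ 0 := by
    rintro rfl
    obtain ⟨x, hx, hχx⟩ := hχ'
    exact hχx (by simpa using (hc₁ x hx).symm)
  have hunique := sub_mul_inv_pow_mem_of_addChar_eq O ψ hϖO hϖ0 hϖgen hval hψnt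
    (show k ≤ m by omega)
  refine ⟨fun l hl c' _ _ hc' => ?_, fun a _ _ c' _ _ hc' => ?_⟩
  · have hlP := intCast_mul_inv_notMem O ψ χ hψO (by omega) hcO hc₁ hl
    have hl0 : (l : F) ≠ 0 := fun h => hlP (by simp [h])
    have hlinv : (l : F)⁻¹ ∈ O := by_contra fun h => hlP (hϖgen _ (intCast_mem O l) h)
    have hdiff := hunique (l * c') (l * c) fun x hx => by
      have hassoc : ∀ b : F, l * b * (x - 1) * (ϖ ^ m)⁻¹ = l * (b * (x - 1) * (ϖ ^ m)⁻¹) :=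
        fun b => by ring
      rw [hassoc, hassoc, hc' x hx, ← zsmul_eq_mul, ψ.map_zsmul_eq_zpow, hc x hx, inv_zpow]
    have h : (c' - c) * (ϖ ^ k)⁻¹ = (l : F)⁻¹ * ((l * c' - l * c) * (ϖ ^ k)⁻¹) := by
      field_simp
    exact mul_inv_sub_one_mul_mem O hc0 hcu (h ▸ O.mul_mem hlinv hdiff)
  · rw [mul_inv, inv_inv, ← mul_assoc, mul_comm c' a]
    refine mul_inv_sub_one_mul_mem O hc0 hcu (hunique (a * c') c fun x hx => ?_)
    rw [mul_assoc, mul_assoc, ← mul_assoc c', hc' x hx, hc x hx]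

/-- Let `F` be a p-adic field with normalized `ψ` and `χ` of conductor `m ≥ 2`,
`k = ⌊m/2⌋`, and let `c` be the element (unique mod `1+P^k`) with
`ψ(cϖ^{-m}(x-1)) = χ(x)⁻¹` on `1+P^{m-k}`. Then for any integer `l` with `χ^l`
still of conductor `m`, one has `c_{χ^l, ψ_l} = c_{χ,ψ}` in `Oˣ/(1+P^k)`, and for a
unit `a` of `O`, `c_{χ, ψ_a} = a⁻¹ · c_{χ,ψ}` in `Oˣ/(1+P^k)`. -/
theorem stmt_15 {p : ℕ} [Fact p.Prime] {F : Type*} [Field F]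
    [Algebra ℚ_[p] F] [FiniteDimensional ℚ_[p] F]
    (O : Subring F) (ϖ : F)
    (hϖO : ϖ ∈ O) (hϖ0 : ϖ ≠ 0) (hϖnu : ϖ⁻¹ ∉ O)
    (hϖgen : ∀ x : F, x ∈ O → x⁻¹ ∉ O → x * ϖ⁻¹ ∈ O)
    (hval : ∀ x : F, x ≠ 0 → ∃ n : ℤ, x * (ϖ ^ n)⁻¹ ∈ O ∧ (x * (ϖ ^ n)⁻¹)⁻¹ ∈ O)
    (ψ : AddChar F ℂ)
    (hψO : ∀ x : F, x ∈ O → ψ x = 1)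
    (hψnt : ∃ x : F, ϖ * x ∈ O ∧ ψ x ≠ 1)
    (m : ℕ) (hm : 2 ≤ m) (k : ℕ) (hk : k = m / 2)
    (χ : F →* ℂ)
    (hχ : ∀ x : F, (x - 1) * (ϖ ^ m)⁻¹ ∈ O → χ x = 1)
    (hχ' : ∃ x : F, (x - 1) * (ϖ ^ (m - 1))⁻¹ ∈ O ∧ χ x ≠ 1)
    (c : F) (hcO : c ∈ O) (hcu : c⁻¹ ∈ O)
    (hc : ∀ x : F, (x - 1) * (ϖ ^ (m - k))⁻¹ ∈ O →
      ψ (c * (x - 1) * (ϖ ^ m)⁻¹) = (χ x)⁻¹) :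
    (∀ l : ℤ,
      (∃ x : F, (x - 1) * (ϖ ^ (m - 1))⁻¹ ∈ O ∧ (χ x) ^ l ≠ 1) →
      ∀ c' : F, c' ∈ O → c'⁻¹ ∈ O →
        (∀ x : F, (x - 1) * (ϖ ^ (m - k))⁻¹ ∈ O →
          ψ ((l : F) * (c' * (x - 1) * (ϖ ^ m)⁻¹)) = ((χ x) ^ l)⁻¹) →
        (c' * c⁻¹ - 1) * (ϖ ^ k)⁻¹ ∈ O) ∧
    (∀ a : F, a ∈ O → a⁻¹ ∈ O →
      ∀ c' : F, c' ∈ O → c'⁻¹ ∈ O →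
        (∀ x : F, (x - 1) * (ϖ ^ (m - k))⁻¹ ∈ O →
          ψ (a * (c' * (x - 1) * (ϖ ^ m)⁻¹)) = (χ x)⁻¹) →
        (c' * (a⁻¹ * c)⁻¹ - 1) * (ϖ ^ k)⁻¹ ∈ O) :=
  stmt_15_general O ϖ hϖO hϖ0 hϖgen hval ψ hψO hψnt m hm k hk χ hχ' c hcO hcu hc
end
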